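/- arXiv:math/0612534 — 2 statements merged into one kernel-verified Lean document; each statement's English description precedes it below -/
import Mathlib

section
/- Let V(x) = 1/‖x‖ be the Kepler potential on ℝ² ∖ {0}, and let β, β' ∈ ℝ⁶ be such that V is compatible with both Killing tensors K(β) and K(β') on ℝ² ∖ {0} (i.e., both Bertrand–Darboux one-forms are closed). Then β₃ = 0, β₁ = β₂, β'₃ = 0 and β'₁ = β'₂; consequently K(β)(0) and K(β')(0) are both scalar multiples of the identity matrix, so the origin is a common singular point (common focus) of the coordinate webs generated by K(β) and K(β'). This is the direction (2) ⟹ (1) of the main theorem: potentials equal to the Kepler potential force a vanishing resultant, i.e. a common focus, for any pair of compatible Killing tensors. -/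
/-!
For `V = 1/r` one has `∂ᵢV = -xᵢ r⁻³`, so the Bertrand–Darboux form of `K(β)` is
`-r⁻³ (x₁K¹¹ + x₂K¹², x₁K¹² + x₂K²²)`. On differentiating, the contributions of `β₄, β₅, β₆`
cancel identically and the closure defect is `3((β₁ - β₂)x₁x₂ + β₃(x₂² - x₁²)) r⁻⁵`.
Its vanishing at `(1,0)` and `(1,1)` forces `β₃ = 0` and `β₁ = β₂`, i.e. `K(β)(0) = β₁ I`.
The code indexes `β` from `0`, so `β₃` is `β 2`.
-/

open Real

/-- Partial derivative with respect to the first Cartesian coordinate. -/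
noncomputable def pd1 (f : ℝ × ℝ → ℝ) (x : ℝ × ℝ) : ℝ :=
  deriv (fun t => f (t, x.2)) x.1

/-- Partial derivative with respect to the second Cartesian coordinate. -/
noncomputable def pd2 (f : ℝ × ℝ → ℝ) (x : ℝ × ℝ) : ℝ :=
  deriv (fun t => f (x.1, t)) x.2

/-- Component `K¹¹` of the general Killing two-tensor of the Euclidean plane. -/
def K11 (β : Fin 6 → ℝ) (x : ℝ × ℝ) : ℝ := β 0 + 2 * β 3 * x.2 + β 5 * x.2 ^ 2

/-- Component `K¹² = K²¹` of the general Killing two-tensor of the Euclidean plane. -/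
def K12 (β : Fin 6 → ℝ) (x : ℝ × ℝ) : ℝ := β 2 - β 3 * x.1 - β 4 * x.2 - β 5 * x.1 * x.2

/-- Component `K²²` of the general Killing two-tensor of the Euclidean plane. -/
def K22 (β : Fin 6 → ℝ) (x : ℝ × ℝ) : ℝ := β 1 + 2 * β 4 * x.1 + β 5 * x.1 ^ 2

/-- `V` is compatible with `K(β)` on `U` : the Bertrand–Darboux one-form
`(K¹¹∂₁V + K¹²∂₂V)dx₁ + (K¹²∂₁V + K²²∂₂V)dx₂` is closed on `U`. -/
def Compatible (β : Fin 6 → ℝ) (V : ℝ × ℝ → ℝ) (U : Set (ℝ × ℝ)) : Prop :=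
  ∀ x ∈ U,
    pd2 (fun y => K11 β y * pd1 V y + K12 β y * pd2 V y) x
      = pd1 (fun y => K12 β y * pd1 V y + K22 β y * pd2 V y) x

/-- The Kepler potential `V(x) = 1/‖x‖`. -/
noncomputable def kepler : ℝ × ℝ → ℝ :=
  fun x => 1 / Real.sqrt (x.1 ^ 2 + x.2 ^ 2)

open Filter Topology

lemma pd1_congr_of_eventuallyEq {f g : ℝ × ℝ → ℝ} {x : ℝ × ℝ} (h : f =ᶠ[𝓝 x] g) :
    pd1 f x = pd1 g x :=
  (h.comp_tendsto ((Continuous.prodMk_left x.2).tendsto x.1)).deriv_eq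

lemma pd2_congr_of_eventuallyEq {f g : ℝ × ℝ → ℝ} {x : ℝ × ℝ} (h : f =ᶠ[𝓝 x] g) :
    pd2 f x = pd2 g x :=
  (h.comp_tendsto ((Continuous.prodMk_right x.1).tendsto x.2)).deriv_eq

lemma hasDerivAt_sq_add_rpow (s c t : ℝ) (h : 0 < t ^ 2 + c) :
    HasDerivAt (fun u => (u ^ 2 + c) ^ s) (2 * s * t * (t ^ 2 + c) ^ (s - 1)) t := by
  convert ((hasDerivAt_pow 2 t).add_const c).rpow_const (p := s) (Or.inl h.ne') using 1
  simp only [Nat.cast_ofNat, Nat.add_one_sub_one, pow_one]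
  ring

lemma hasDerivAt_quadratic_mul_sq_add_rpow (p q r s c t : ℝ) (h : 0 < t ^ 2 + c) :
    HasDerivAt (fun u => (p + q * u + r * u ^ 2) * (u ^ 2 + c) ^ s)
      ((q + 2 * r * t) * (t ^ 2 + c) ^ s
        + (p + q * t + r * t ^ 2) * (2 * s * t * (t ^ 2 + c) ^ (s - 1))) t := by
  have hquad : HasDerivAt (fun u => p + q * u + r * u ^ 2) (q + 2 * r * t) t := by
    refine ((((hasDerivAt_id' t).const_mul q).const_add p).add
      ((hasDerivAt_pow 2 t).const_mul r)).congr_deriv ?_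
    simp only [Nat.cast_ofNat, Nat.add_one_sub_one, pow_one]
    ring
  exact hquad.mul (hasDerivAt_sq_add_rpow s c t h)

lemma kepler_eq_rpow (x : ℝ × ℝ) : kepler x = (x.1 ^ 2 + x.2 ^ 2) ^ (-1 / 2 : ℝ) := by
  rw [kepler, Real.sqrt_eq_rpow, neg_div, Real.rpow_neg (by positivity), one_div]

lemma sq_fst_add_sq_snd_pos {x : ℝ × ℝ} (hx : x ≠ 0) : 0 < x.1 ^ 2 + x.2 ^ 2 := by
  refine (by positivity : (0 : ℝ) ≤ _).lt_of_ne' fun h => hx ?_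
  simp only [sq] at h
  obtain ⟨h1, h2⟩ := mul_self_add_mul_self_eq_zero.1 h
  exact Prod.ext h1 h2

lemma pd1_kepler {x : ℝ × ℝ} (hx : x ≠ 0) :
    pd1 kepler x = -x.1 * (x.1 ^ 2 + x.2 ^ 2) ^ (-3 / 2 : ℝ) := by
  simp only [pd1, kepler_eq_rpow]
  rw [(hasDerivAt_sq_add_rpow _ _ x.1 (sq_fst_add_sq_snd_pos hx)).deriv]
  norm_num

lemma pd2_kepler {x : ℝ × ℝ} (hx : x ≠ 0) :
    pd2 kepler x = -x.2 * (x.1 ^ 2 + x.2 ^ 2) ^ (-3 / 2 : ℝ) := by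
  have hρ : 0 < x.2 ^ 2 + x.1 ^ 2 := add_comm (x.1 ^ 2) _ ▸ sq_fst_add_sq_snd_pos hx
  simp only [pd2, kepler_eq_rpow, add_comm (x.1 ^ 2)]
  rw [(hasDerivAt_sq_add_rpow _ _ x.2 hρ).deriv]
  norm_num

lemma kepler_bertrandDarboux_fst_eq (β : Fin 6 → ℝ) {y : ℝ × ℝ} (hy : y ≠ 0) :
    K11 β y * pd1 kepler y + K12 β y * pd2 kepler y
      = -(y.1 * K11 β y + y.2 * K12 β y) * (y.1 ^ 2 + y.2 ^ 2) ^ (-3 / 2 : ℝ) := by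
  rw [pd1_kepler hy, pd2_kepler hy]
  ring

lemma kepler_bertrandDarboux_snd_eq (β : Fin 6 → ℝ) {y : ℝ × ℝ} (hy : y ≠ 0) :
    K12 β y * pd1 kepler y + K22 β y * pd2 kepler y
      = -(y.1 * K12 β y + y.2 * K22 β y) * (y.1 ^ 2 + y.2 ^ 2) ^ (-3 / 2 : ℝ) := by
  rw [pd1_kepler hy, pd2_kepler hy]
  ring

lemma kepler_bertrandDarboux_defect (β : Fin 6 → ℝ) {x : ℝ × ℝ} (hx : x ≠ 0) :
    pd2 (fun y => K11 β y * pd1 kepler y + K12 β y * pd2 kepler y) x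
      - pd1 (fun y => K12 β y * pd1 kepler y + K22 β y * pd2 kepler y) x
      = 3 * ((β 0 - β 1) * x.1 * x.2 + β 2 * (x.2 ^ 2 - x.1 ^ 2))
          * (x.1 ^ 2 + x.2 ^ 2) ^ (-5 / 2 : ℝ) := by
  rw [pd2_congr_of_eventuallyEq
      ((eventually_ne_nhds hx).mono fun _ => kepler_bertrandDarboux_fst_eq β),
    pd1_congr_of_eventuallyEq
      ((eventually_ne_nhds hx).mono fun _ => kepler_bertrandDarboux_snd_eq β)]
  obtain ⟨a, b⟩ := x
  have hρ : 0 < a ^ 2 + b ^ 2 := sq_fst_add_sq_snd_pos hx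
  have hline₁ : (fun t => -(a * K11 β (a, t) + t * K12 β (a, t)) * (a ^ 2 + t ^ 2) ^ (-3 / 2 : ℝ))
      = fun t => (-(a * β 0) + (-(a * β 3) - β 2) * t + β 4 * t ^ 2)
          * (t ^ 2 + a ^ 2) ^ (-3 / 2 : ℝ) := by
    funext t
    simp only [K11, K12, add_comm (a ^ 2)]
    ring
  have hline₂ : (fun t => -(t * K12 β (t, b) + b * K22 β (t, b)) * (t ^ 2 + b ^ 2) ^ (-3 / 2 : ℝ))
      = fun t => (-(b * β 1) + (-(β 2) - b * β 4) * t + β 3 * t ^ 2)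
          * (t ^ 2 + b ^ 2) ^ (-3 / 2 : ℝ) := by
    funext t
    simp only [K12, K22]
    ring
  simp only [pd1, pd2]
  rw [hline₁, hline₂,
    (hasDerivAt_quadratic_mul_sq_add_rpow _ _ _ _ _ b (by linarith)).deriv,
    (hasDerivAt_quadratic_mul_sq_add_rpow _ _ _ _ _ a hρ).deriv]
  have hexp : (-3 / 2 : ℝ) - 1 = -5 / 2 := by norm_num
  have hpow :
      (a ^ 2 + b ^ 2) ^ (-3 / 2 : ℝ) = (a ^ 2 + b ^ 2) ^ (-5 / 2 : ℝ) * (a ^ 2 + b ^ 2) := by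
    rw [← Real.rpow_add_one hρ.ne']
    norm_num
  rw [hexp, add_comm (b ^ 2), hpow]
  ring

theorem compatible_kepler_iff (β : Fin 6 → ℝ) :
    Compatible β kepler {x | x ≠ 0} ↔ β 2 = 0 ∧ β 0 = β 1 := by
  constructor
  · intro h
    have hvanish : ∀ x : ℝ × ℝ, x ≠ 0 →
        (β 0 - β 1) * x.1 * x.2 + β 2 * (x.2 ^ 2 - x.1 ^ 2) = 0 := by
      intro x hx
      have hdefect := kepler_bertrandDarboux_defect β hx
      rw [h x hx, sub_self] at hdefect
      have hw := Real.rpow_pos_of_pos (sq_fst_add_sq_snd_pos hx) (-5 / 2)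
      simpa [hw.ne'] using hdefect.symm
    have h₁₀ := hvanish (1, 0) (by simp)
    have h₁₁ := hvanish (1, 1) (by simp)
    norm_num at h₁₀ h₁₁
    exact ⟨h₁₀, by linarith⟩
  · rintro ⟨h2, h01⟩ x hx
    rw [← sub_eq_zero, kepler_bertrandDarboux_defect β hx, h2, h01]
    ring

lemma exists_K_origin_eq_scalar_iff (β : Fin 6 → ℝ) :
    (∃ c : ℝ, K11 β (0, 0) = c ∧ K22 β (0, 0) = c ∧ K12 β (0, 0) = 0) ↔ β 2 = 0 ∧ β 0 = β 1 := by
  simp [K11, K22, K12, and_comm, eq_comm]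

/-- If the Kepler potential is compatible with the Killing tensors `K(β)` and
`K(β')` on `ℝ² ∖ {0}`, then `β₃ = 0`, `β₁ = β₂`, `β'₃ = 0` and `β'₁ = β'₂`;
consequently `K(β)(0)` and `K(β')(0)` are scalar multiples of the identity
matrix, so the origin is a common singular point (common focus, i.e. a
vanishing resultant) of the coordinate webs generated by `K(β)` and `K(β')`. -/
theorem kepler_forces_common_focus_at_origin
    (β β' : Fin 6 → ℝ)
    (h : Compatible β kepler {x : ℝ × ℝ | x ≠ 0})
    (h' : Compatible β' kepler {x : ℝ × ℝ | x ≠ 0}) :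
    (β 2 = 0 ∧ β 0 = β 1) ∧ (β' 2 = 0 ∧ β' 0 = β' 1) ∧
    (∃ c : ℝ, K11 β (0, 0) = c ∧ K22 β (0, 0) = c ∧ K12 β (0, 0) = 0) ∧
    (∃ c' : ℝ, K11 β' (0, 0) = c' ∧ K22 β' (0, 0) = c' ∧ K12 β' (0, 0) = 0) := by
  have hβ := (compatible_kepler_iff β).1 h
  have hβ' := (compatible_kepler_iff β').1 h'
  exact ⟨hβ, hβ', (exists_K_origin_eq_scalar_iff β).2 hβ,
    (exists_K_origin_eq_scalar_iff β').2 hβ'⟩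
end

section
/- Let V : ℝ² ∖ {0} → ℝ be smooth and suppose that for every (β₄,β₅,β₆) ∈ ℝ³ the potential V is compatible on ℝ² ∖ {0} with the Killing tensor of the three-parameter family whose components are K¹¹ = 2β₄x₂ + β₆x₂², K¹² = −β₄x₁ − β₅x₂ − β₆x₁x₂, K²² = 2β₅x₁ + β₆x₁² (i.e., each corresponding Bertrand–Darboux one-form is closed). Then there exist constants m, n ∈ ℝ such that V(x) = m/‖x‖ + n for all x ∈ ℝ² ∖ {0}; that is, V is the Kepler potential up to scale and an additive constant. -/
open Real

/-- `V` is compatible on `U` with the symmetric tensor with components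
`K¹¹, K¹² = K²¹, K²²` : the Bertrand–Darboux one-form
`(K¹¹∂₁V + K¹²∂₂V)dx₁ + (K¹²∂₁V + K²²∂₂V)dx₂` is closed on `U`. -/
def CompatibleWith (k11 k12 k22 : ℝ × ℝ → ℝ) (V : ℝ × ℝ → ℝ)
    (U : Set (ℝ × ℝ)) : Prop :=
  ∀ x ∈ U,
    pd2 (fun y => k11 y * pd1 V y + k12 y * pd2 V y) x
      = pd1 (fun y => k12 y * pd1 V y + k22 y * pd2 V y) x

/-!
Expanding the closedness of the Bertrand–Darboux form by the Leibniz rule gives, for each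
`β`, a linear equation in the first and second partial derivatives of `V`. For the unit
vectors `β = e₄, e₅, e₆` the combination `2 e₆ - x₂ e₄ - x₁ e₅` eliminates every second derivative
and leaves the angular equation `x₂ ∂₁V = x₁ ∂₂V`, so `V` is constant on circles about the
origin. On the positive `x₁`-axis, `e₄` minus the `x₂`-derivative of the angular equation is
the Euler equation `t g'' + 2 g' = 0` for `g t = V (t, 0)`, whose solutions are `m / t + n`.
-/

open Filter Topology

section PartialDerivatives

variable {f g a b : ℝ × ℝ → ℝ} {x : ℝ × ℝ}

theorem pd1_eq_fderiv (hf : DifferentiableAt ℝ f x) : pd1 f x = fderiv ℝ f x (1, 0) :=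
  (hf.hasFDerivAt.comp_hasDerivAt x.1 ((hasDerivAt_id x.1).prodMk (hasDerivAt_const _ _))).deriv

theorem pd2_eq_fderiv (hf : DifferentiableAt ℝ f x) : pd2 f x = fderiv ℝ f x (0, 1) :=
  (hf.hasFDerivAt.comp_hasDerivAt x.2 ((hasDerivAt_const _ _).prodMk (hasDerivAt_id x.2))).deriv

theorem hasDerivAt_pd1 (hf : DifferentiableAt ℝ f x) :
    HasDerivAt (fun t => f (t, x.2)) (pd1 f x) x.1 :=
  (hf.comp x.1 (differentiableAt_id.prodMk (differentiableAt_const _))).hasDerivAt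

theorem hasDerivAt_pd2 (hf : DifferentiableAt ℝ f x) :
    HasDerivAt (fun t => f (x.1, t)) (pd2 f x) x.2 :=
  (hf.comp x.2 ((differentiableAt_const _).prodMk differentiableAt_id)).hasDerivAt

theorem fderiv_apply_eq_pd (hf : DifferentiableAt ℝ f x) (v : ℝ × ℝ) :
    fderiv ℝ f x v = v.1 * pd1 f x + v.2 * pd2 f x := by
  have hv : v = v.1 • ((1 : ℝ), (0 : ℝ)) + v.2 • ((0 : ℝ), (1 : ℝ)) := by simp
  rw [hv, map_add, map_smul, map_smul, pd1_eq_fderiv hf, pd2_eq_fderiv hf]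
  simp

theorem pd2_congr (hfg : f =ᶠ[𝓝 x] g) : pd2 f x = pd2 g x :=
  (hfg.comp_tendsto ((Continuous.prodMk_right x.1).tendsto' x.2 x rfl)).deriv_eq

theorem pd1_mul_add_mul (ha : DifferentiableAt ℝ a x) (hf : DifferentiableAt ℝ f x)
    (hb : DifferentiableAt ℝ b x) (hg : DifferentiableAt ℝ g x) :
    pd1 (fun y => a y * f y + b y * g y) x
      = pd1 a x * f x + a x * pd1 f x + (pd1 b x * g x + b x * pd1 g x) :=
  (((hasDerivAt_pd1 ha).mul (hasDerivAt_pd1 hf)).add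
    ((hasDerivAt_pd1 hb).mul (hasDerivAt_pd1 hg))).deriv

theorem pd2_mul_add_mul (ha : DifferentiableAt ℝ a x) (hf : DifferentiableAt ℝ f x)
    (hb : DifferentiableAt ℝ b x) (hg : DifferentiableAt ℝ g x) :
    pd2 (fun y => a y * f y + b y * g y) x
      = pd2 a x * f x + a x * pd2 f x + (pd2 b x * g x + b x * pd2 g x) :=
  (((hasDerivAt_pd2 ha).mul (hasDerivAt_pd2 hf)).add
    ((hasDerivAt_pd2 hb).mul (hasDerivAt_pd2 hg))).deriv

theorem ContDiffOn.pd1_of_isOpen {U : Set (ℝ × ℝ)} {m n : WithTop ℕ∞} (hf : ContDiffOn ℝ n f U)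
    (hU : IsOpen U) (hmn : m + 1 ≤ n) : ContDiffOn ℝ m (pd1 f) U :=
  ((hf.fderiv_of_isOpen hU hmn).clm_apply contDiffOn_const).congr fun _ hy =>
    pd1_eq_fderiv <| (hf.contDiffAt (hU.mem_nhds hy)).differentiableAt
      (one_pos.trans_le (le_add_self.trans hmn)).ne'

theorem ContDiffOn.pd2_of_isOpen {U : Set (ℝ × ℝ)} {m n : WithTop ℕ∞} (hf : ContDiffOn ℝ n f U)
    (hU : IsOpen U) (hmn : m + 1 ≤ n) : ContDiffOn ℝ m (pd2 f) U :=
  ((hf.fderiv_of_isOpen hU hmn).clm_apply contDiffOn_const).congr fun _ hy =>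
    pd2_eq_fderiv <| (hf.contDiffAt (hU.mem_nhds hy)).differentiableAt
      (one_pos.trans_le (le_add_self.trans hmn)).ne'

theorem ContDiffOn.differentiableAt_pd1 {U : Set (ℝ × ℝ)} (hf : ContDiffOn ℝ 2 f U)
    (hU : IsOpen U) (hx : x ∈ U) : DifferentiableAt ℝ (pd1 f) x :=
  ((hf.pd1_of_isOpen hU (m := 1) (by norm_num)).differentiableOn one_ne_zero).differentiableAt
    (hU.mem_nhds hx)

theorem ContDiffOn.differentiableAt_pd2 {U : Set (ℝ × ℝ)} (hf : ContDiffOn ℝ 2 f U)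
    (hU : IsOpen U) (hx : x ∈ U) : DifferentiableAt ℝ (pd2 f) x :=
  ((hf.pd2_of_isOpen hU (m := 1) (by norm_num)).differentiableOn one_ne_zero).differentiableAt
    (hU.mem_nhds hx)

end PartialDerivatives

theorem CompatibleWith.expand {k11 k12 k22 V : ℝ × ℝ → ℝ} {U : Set (ℝ × ℝ)} {x : ℝ × ℝ}
    (h : CompatibleWith k11 k12 k22 V U) (hx : x ∈ U) (hk11 : DifferentiableAt ℝ k11 x)
    (hk12 : DifferentiableAt ℝ k12 x) (hk22 : DifferentiableAt ℝ k22 x)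
    (hV₁ : DifferentiableAt ℝ (pd1 V) x) (hV₂ : DifferentiableAt ℝ (pd2 V) x) :
    pd2 k11 x * pd1 V x + k11 x * pd2 (pd1 V) x + (pd2 k12 x * pd2 V x + k12 x * pd2 (pd2 V) x)
      = pd1 k12 x * pd1 V x + k12 x * pd1 (pd1 V) x
        + (pd1 k22 x * pd2 V x + k22 x * pd1 (pd2 V) x) := by
  rw [← pd2_mul_add_mul hk11 hV₁ hk12 hV₂, ← pd1_mul_add_mul hk12 hV₁ hk22 hV₂]
  exact h x hx

def CompatibleWithKillingFamily (V : ℝ × ℝ → ℝ) (U : Set (ℝ × ℝ)) : Prop :=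
  ∀ β₄ β₅ β₆ : ℝ,
    CompatibleWith
      (fun x => 2 * β₄ * x.2 + β₆ * x.2 ^ 2)
      (fun x => -(β₄ * x.1) - β₅ * x.2 - β₆ * x.1 * x.2)
      (fun x => 2 * β₅ * x.1 + β₆ * x.1 ^ 2)
      V U

namespace CompatibleWithKillingFamily

variable {V : ℝ × ℝ → ℝ} {U : Set (ℝ × ℝ)} {x : ℝ × ℝ}

theorem expand (h : CompatibleWithKillingFamily V U) (hU : IsOpen U) (hV : ContDiffOn ℝ 2 V U)
    (hx : x ∈ U) (β₄ β₅ β₆ : ℝ) :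
    (2 * β₄ + 2 * β₆ * x.2) * pd1 V x + (2 * β₄ * x.2 + β₆ * x.2 ^ 2) * pd2 (pd1 V) x
      + ((-β₅ - β₆ * x.1) * pd2 V x
        + (-(β₄ * x.1) - β₅ * x.2 - β₆ * x.1 * x.2) * pd2 (pd2 V) x)
    = (-β₄ - β₆ * x.2) * pd1 V x + (-(β₄ * x.1) - β₅ * x.2 - β₆ * x.1 * x.2) * pd1 (pd1 V) x
      + ((2 * β₅ + 2 * β₆ * x.1) * pd2 V x + (2 * β₅ * x.1 + β₆ * x.1 ^ 2) * pd1 (pd2 V) x) := by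
  have h' := (h β₄ β₅ β₆).expand hx (by fun_prop) (by fun_prop) (by fun_prop)
    (hV.differentiableAt_pd1 hU hx) (hV.differentiableAt_pd2 hU hx)
  have d₂k₁₁ : pd2 (fun x => 2 * β₄ * x.2 + β₆ * x.2 ^ 2) x = 2 * β₄ + 2 * β₆ * x.2 := by
    simp (disch := fun_prop) [pd2, deriv_fun_add, deriv_fun_mul]; ring
  have d₁k₁₂ : pd1 (fun x => -(β₄ * x.1) - β₅ * x.2 - β₆ * x.1 * x.2) x = -β₄ - β₆ * x.2 := by
    simp (disch := fun_prop) [pd1, deriv_fun_sub, deriv_fun_mul]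
  have d₂k₁₂ : pd2 (fun x => -(β₄ * x.1) - β₅ * x.2 - β₆ * x.1 * x.2) x = -β₅ - β₆ * x.1 := by
    simp (disch := fun_prop) [pd2, deriv_fun_sub]
  have d₁k₂₂ : pd1 (fun x => 2 * β₅ * x.1 + β₆ * x.1 ^ 2) x = 2 * β₅ + 2 * β₆ * x.1 := by
    simp (disch := fun_prop) [pd1, deriv_fun_add, deriv_fun_mul]; ring
  rwa [d₂k₁₁, d₁k₁₂, d₂k₁₂, d₁k₂₂] at h'

theorem snd_mul_pd1_eq_fst_mul_pd2 (h : CompatibleWithKillingFamily V U) (hU : IsOpen U)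
    (hV : ContDiffOn ℝ 2 V U) (hx : x ∈ U) : x.2 * pd1 V x = x.1 * pd2 V x := by
  have e₄ := h.expand hU hV hx 1 0 0
  have e₅ := h.expand hU hV hx 0 1 0
  have e₆ := h.expand hU hV hx 0 0 1
  -- every second derivative cancels, so symmetry of mixed partials is not needed
  linear_combination (2 * e₆ - x.2 * e₄ - x.1 * e₅) / 3

theorem fst_mul_pd1_pd1_add_two_mul_pd1_eq_zero (h : CompatibleWithKillingFamily V U)
    (hU : IsOpen U) (hV : ContDiffOn ℝ 2 V U) (hx : x ∈ U) (hx₂ : x.2 = 0) :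
    x.1 * pd1 (pd1 V) x + 2 * pd1 V x = 0 := by
  have hrot : ∀ y ∈ U, y.2 * pd1 V y + -y.1 * pd2 V y = 0 := fun y hy => by
    rw [h.snd_mul_pd1_eq_fst_mul_pd2 hU hV hy]; ring
  have hrot_pd2 : pd2 (fun y => y.2 * pd1 V y + -y.1 * pd2 V y) x = 0 := by
    rw [pd2_congr (g := fun _ => 0) (eventually_of_mem (hU.mem_nhds hx) hrot)]
    simp [pd2]
  have d₂snd : pd2 (fun y => y.2) x = 1 := by simp [pd2]
  have d₂fst : pd2 (fun y => -y.1) x = 0 := by simp [pd2]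
  rw [pd2_mul_add_mul (by fun_prop) (hV.differentiableAt_pd1 hU hx) (by fun_prop)
    (hV.differentiableAt_pd2 hU hx), d₂snd, d₂fst, hx₂] at hrot_pd2
  have e₄ := h.expand hU hV hx 1 0 0
  rw [hx₂] at e₄
  linear_combination e₄ - hrot_pd2

end CompatibleWithKillingFamily

theorem exists_const_of_hasDerivAt_zero_Ioi {φ : ℝ → ℝ} (h : ∀ t > 0, HasDerivAt φ 0 t) :
    ∃ C, ∀ t > 0, φ t = C :=
  isOpen_Ioi.exists_is_const_of_deriv_eq_zero isPreconnected_Ioi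
    (fun t ht => (h t ht).differentiableAt.differentiableWithinAt) fun t ht => (h t ht).deriv

theorem exists_eq_div_add_of_euler_equation {g g' g'' : ℝ → ℝ}
    (hg : ∀ t > 0, HasDerivAt g (g' t) t) (hg' : ∀ t > 0, HasDerivAt g' (g'' t) t)
    (hode : ∀ t > 0, t * g'' t + 2 * g' t = 0) :
    ∃ m n : ℝ, ∀ t > 0, g t = m / t + n := by
  -- `t ^ 2 * g'` is a first integral of the equation
  obtain ⟨C, hC⟩ : ∃ C, ∀ t > 0, t ^ 2 * g' t = C :=
    exists_const_of_hasDerivAt_zero_Ioi fun t ht => by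
      refine ((hasDerivAt_pow 2 t).mul (hg' t ht)).congr_deriv ?_
      linear_combination t * hode t ht
  obtain ⟨n, hn⟩ : ∃ n, ∀ t > 0, g t + C * t⁻¹ = n :=
    exists_const_of_hasDerivAt_zero_Ioi fun t ht => by
      refine ((hg t ht).add ((hasDerivAt_inv ht.ne').const_mul C)).congr_deriv ?_
      field_simp
      linear_combination hC t ht
  exact ⟨-C, n, fun t ht => by linear_combination hn t ht⟩

theorem eq_apply_radius_of_snd_mul_pd1_eq_fst_mul_pd2 {V : ℝ × ℝ → ℝ}
    (hV : DifferentiableOn ℝ V {x | x ≠ 0})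
    (hrot : ∀ x : ℝ × ℝ, x ≠ 0 → x.2 * pd1 V x = x.1 * pd2 V x) {x : ℝ × ℝ} (hx : x ≠ 0) :
    V x = V (√(x.1 ^ 2 + x.2 ^ 2), 0) := by
  set z : ℂ := ⟨x.1, x.2⟩
  set r := ‖z‖
  have hr : 0 < r :=
    norm_pos_iff.mpr fun hz => hx (Prod.ext (congrArg Complex.re hz) (congrArg Complex.im hz))
  set γ : ℝ → ℝ × ℝ := fun θ => (r * cos θ, r * sin θ)
  have hγ : ∀ θ, γ θ ≠ 0 := fun θ hθ => by
    have hcos : cos θ = 0 := (mul_eq_zero.mp (congrArg Prod.fst hθ)).resolve_left hr.ne'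
    have hsin : sin θ = 0 := (mul_eq_zero.mp (congrArg Prod.snd hθ)).resolve_left hr.ne'
    simpa [hcos, hsin] using sin_sq_add_cos_sq θ
  have hderiv : ∀ θ, HasDerivAt (fun θ => V (γ θ)) 0 θ := fun θ => by
    have hγ' : HasDerivAt γ (-(r * sin θ), r * cos θ) θ := by
      simpa using ((hasDerivAt_cos θ).const_mul r).prodMk ((hasDerivAt_sin θ).const_mul r)
    have hVd := (hV _ (hγ θ)).differentiableAt (isOpen_ne.mem_nhds (hγ θ))
    have hVγ := hVd.hasFDerivAt.comp_hasDerivAt θ hγ'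
    rw [fderiv_apply_eq_pd hVd] at hVγ
    refine hVγ.congr_deriv ?_
    linear_combination -hrot (γ θ) (hγ θ)
  have hconst := is_const_of_deriv_eq_zero (fun θ => (hderiv θ).differentiableAt)
    (fun θ => (hderiv θ).deriv) (Complex.arg z) 0
  have hx₁ : r * cos (Complex.arg z) = x.1 := Complex.norm_mul_cos_arg z
  have hx₂ : r * sin (Complex.arg z) = x.2 := Complex.norm_mul_sin_arg z
  have hr' : r = √(x.1 ^ 2 + x.2 ^ 2) := by simp [r, z, Complex.norm_def, Complex.normSq_apply, sq]
  simp only [γ, hx₁, hx₂] at hconst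
  simpa [hr'] using hconst

theorem sqrt_fst_sq_add_snd_sq_pos {x : ℝ × ℝ} (hx : x ≠ 0) : 0 < √(x.1 ^ 2 + x.2 ^ 2) := by
  refine Real.sqrt_pos.mpr (lt_of_le_of_ne (by positivity) fun h => hx ?_)
  have h₁ : x.1 = 0 := by nlinarith [sq_nonneg x.1, sq_nonneg x.2]
  have h₂ : x.2 = 0 := by nlinarith [sq_nonneg x.1, sq_nonneg x.2]
  exact Prod.ext h₁ h₂

/-- A smooth potential `V` on `ℝ² ∖ {0}` that is compatible with every member of
the three-parameter family of Killing tensors `K¹¹ = 2β₄x₂ + β₆x₂²`,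
`K¹² = −β₄x₁ − β₅x₂ − β₆x₁x₂`, `K²² = 2β₅x₁ + β₆x₁²` is the Kepler potential up
to scale and an additive constant: `V(x) = m/‖x‖ + n`. -/
theorem compatible_with_three_parameter_family_imp_kepler
    (V : ℝ × ℝ → ℝ) (hV : ContDiffOn ℝ (⊤ : ℕ∞) V {x : ℝ × ℝ | x ≠ 0})
    (hcompat : ∀ β₄ β₅ β₆ : ℝ,
      CompatibleWith
        (fun x => 2 * β₄ * x.2 + β₆ * x.2 ^ 2)
        (fun x => -(β₄ * x.1) - β₅ * x.2 - β₆ * x.1 * x.2)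
        (fun x => 2 * β₅ * x.1 + β₆ * x.1 ^ 2)
        V {x : ℝ × ℝ | x ≠ 0}) :
    ∃ m n : ℝ, ∀ x : ℝ × ℝ, x ≠ 0 →
      V x = m / Real.sqrt (x.1 ^ 2 + x.2 ^ 2) + n := by
  set U := {x : ℝ × ℝ | x ≠ 0}
  have hU : IsOpen U := isOpen_ne
  have hV₂ : ContDiffOn ℝ 2 V U := hV.of_le (by norm_cast)
  have hfamily : CompatibleWithKillingFamily V U := hcompat
  have haxis : ∀ t : ℝ, 0 < t → (t, (0 : ℝ)) ∈ U := fun t ht h => ht.ne' (congrArg Prod.fst h)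
  obtain ⟨m, n, hmn⟩ := exists_eq_div_add_of_euler_equation (g := fun t => V (t, 0))
    (fun t ht => hasDerivAt_pd1 ((hV₂.differentiableOn two_ne_zero).differentiableAt
      (hU.mem_nhds (haxis t ht))))
    (fun t ht => hasDerivAt_pd1 (hV₂.differentiableAt_pd1 hU (haxis t ht)))
    (fun t ht => hfamily.fst_mul_pd1_pd1_add_two_mul_pd1_eq_zero hU hV₂ (haxis t ht) rfl)
  refine ⟨m, n, fun x hx => ?_⟩
  rw [eq_apply_radius_of_snd_mul_pd1_eq_fst_mul_pd2 (hV₂.differentiableOn two_ne_zero)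
    (fun y hy => hfamily.snd_mul_pd1_eq_fst_mul_pd2 hU hV₂ hy) hx]
  exact hmn _ (sqrt_fst_sq_add_snd_sq_pos hx)
end
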